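/- Let Ω be a Polish space containing a non-Borel subset E (e.g., Ω = ℝ), let μ be a Borel probability measure on Ω, and for x ∈ E let T_x = 1_{{x}} ⊗ μ be the weakly continuous rank-one operator ν ↦ ν({x})·μ. The family {T_x : x ∈ E} is order bounded by 1 ⊗ μ, but its supremum S in L(M(Ω)) is not weakly continuous: (Sδ_x)(Ω) = 0 for x ∉ E while (Sδ_x)(Ω) ≥ 1 for x ∈ E, so S*1 = 1_E is not Borel measurable. Hence the lattice of weakly continuous operators is not order complete. -/

import Mathlib

open MeasureTheory Topology Filter
open scoped NNReal ENNReal BoundedContinuousFunction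

noncomputable def sInt {Ω : Type*} [MeasurableSpace Ω] (μ : SignedMeasure Ω) (f : Ω → ℝ) : ℝ :=
  (∫ x, f x ∂μ.toJordanDecomposition.posPart) - ∫ x, f x ∂μ.toJordanDecomposition.negPart

def IsTransKernel {Ω : Type*} [MeasurableSpace Ω] (k : Ω → SignedMeasure Ω) : Prop :=
  ∀ A : Set Ω, MeasurableSet A → Measurable fun x => k x A

def IsBddKernel {Ω : Type*} [MeasurableSpace Ω] (k : Ω → SignedMeasure Ω) : Prop :=
  IsTransKernel k ∧ ∃ C : ℝ≥0, ∀ x, (k x).totalVariation Set.univ ≤ C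

def GivenByKernel {Ω : Type*} [MeasurableSpace Ω]
    (T : SignedMeasure Ω →ₗ[ℝ] SignedMeasure Ω) (k : Ω → SignedMeasure Ω) : Prop :=
  ∀ (μ : SignedMeasure Ω) (A : Set Ω), MeasurableSet A → T μ A = sInt μ (fun x => k x A)

def IsBdMeasurable {Ω : Type*} [MeasurableSpace Ω] (f : Ω → ℝ) : Prop :=
  Measurable f ∧ ∃ C : ℝ, ∀ x, |f x| ≤ C

instance totalVariation_isFiniteMeasure {Ω : Type*} [MeasurableSpace Ω] (μ : SignedMeasure Ω) :
    IsFiniteMeasure μ.totalVariation := by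
  unfold SignedMeasure.totalVariation; infer_instance

/-! Each `Tₓ = 1_{{x}} ⊗ μ` is dominated by `1 ⊗ μ`, which has the constant kernel `μ`. If `x ∉ E`,
then `1_{{x}ᶜ} ⊗ μ` is still an upper bound of the family, and it kills `δₓ`; so the supremum `S`
satisfies `(S δₓ)(Ω) = 0` off `E`, while `(S δₓ)(Ω) ≥ (Tₓ δₓ)(Ω) = 1` on `E`. A kernel `k` for `S`
would make `x ↦ (S δₓ)(Ω) = k x Ω` measurable, and `E` would be its superlevel set at `1`. -/

namespace MeasureTheory

variable {Ω : Type*} [MeasurableSpace Ω]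

lemma SignedMeasure.apply_mono_of_nonneg {ν : SignedMeasure Ω} (hν : 0 ≤ ν) {A B : Set Ω}
    (hA : MeasurableSet A) (hB : MeasurableSet B) (hAB : A ⊆ B) : ν A ≤ ν B := by
  have hsplit : ν B = ν A + ν (B \ A) := by
    rw [← VectorMeasure.of_union Set.disjoint_sdiff_right hA (hB.diff hA),
      Set.union_sdiff_cancel hAB]
  have hdiff : 0 ≤ ν (B \ A) := by simpa using VectorMeasure.le_iff.mp hν _ (hB.diff hA)
  linarith

lemma Measure.toSignedMeasure_toJordanDecomposition (m : Measure Ω) [IsFiniteMeasure m] :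
    m.toSignedMeasure.toJordanDecomposition = ⟨m, 0, .zero_right⟩ :=
  SignedMeasure.toJordanDecomposition_eq <| by
    simp [JordanDecomposition.toSignedMeasure, Measure.toSignedMeasure_zero]

lemma SignedMeasure.apply_univ_eq_sub (ν : SignedMeasure Ω) :
    ν Set.univ = ν.toJordanDecomposition.posPart.real Set.univ
      - ν.toJordanDecomposition.negPart.real Set.univ := by
  conv_lhs => rw [← ν.toSignedMeasure_toJordanDecomposition]
  rw [JordanDecomposition.toSignedMeasure, sub_apply,
    Measure.toSignedMeasure_apply_measurable .univ,
    Measure.toSignedMeasure_apply_measurable .univ]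

lemma sInt_toSignedMeasure (m : Measure Ω) [IsFiniteMeasure m] (f : Ω → ℝ) :
    sInt m.toSignedMeasure f = ∫ x, f x ∂m := by
  simp [sInt, Measure.toSignedMeasure_toJordanDecomposition]

lemma sInt_const (ν : SignedMeasure Ω) (c : ℝ) : sInt ν (fun _ => c) = ν Set.univ * c := by
  rw [sInt, integral_const, integral_const, ν.apply_univ_eq_sub, smul_eq_mul, smul_eq_mul]
  ring

lemma Measure.toSignedMeasure_dirac_apply (x : Ω) {A : Set Ω} (hA : MeasurableSet A) :
    (Measure.dirac x).toSignedMeasure A = A.indicator 1 x := by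
  by_cases hx : x ∈ A <;> simp [Measure.toSignedMeasure_apply_measurable hA, Measure.real, hx,
    Measure.dirac_apply' x hA]

/-- The operator `1_A ⊗ m` of the paper. -/
noncomputable def rankOne (A : Set Ω) (m : SignedMeasure Ω) :
    SignedMeasure Ω →ₗ[ℝ] SignedMeasure Ω where
  toFun ν := ν A • m
  map_add' ν ν' := by simp only [add_apply, add_smul]
  map_smul' c ν := by simp only [smul_apply, RingHom.id_apply, smul_eq_mul, mul_smul]

@[simp] lemma rankOne_apply (A : Set Ω) (m ν : SignedMeasure Ω) : rankOne A m ν = ν A • m := rfl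

lemma rankOne_le_rankOne_of_subset {A B : Set Ω} (hA : MeasurableSet A) (hB : MeasurableSet B)
    (hAB : A ⊆ B) {m ν : SignedMeasure Ω} (hm : 0 ≤ m) (hν : 0 ≤ ν) :
    rankOne A m ν ≤ rankOne B m ν := fun C hC => by
  simpa only [rankOne_apply, smul_apply, smul_eq_mul] using
    mul_le_mul_of_nonneg_right (SignedMeasure.apply_mono_of_nonneg hν hA hB hAB)
      (by simpa using hm C hC)

lemma isBddKernel_const (m : SignedMeasure Ω) : IsBddKernel fun _ : Ω => m :=
  ⟨fun _ _ => measurable_const,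
    (m.totalVariation Set.univ).toNNReal, fun _ => (ENNReal.coe_toNNReal (measure_ne_top _ _)).ge⟩

lemma givenByKernel_rankOne_univ (m : SignedMeasure Ω) :
    GivenByKernel (rankOne Set.univ m) fun _ => m := fun ν A _ => by
  simp [sInt_const]

lemma rankOne_apply_dirac_univ {A : Set Ω} (hA : MeasurableSet A) (m : SignedMeasure Ω)
    (x : Ω) :
    rankOne A m (Measure.dirac x).toSignedMeasure Set.univ = A.indicator 1 x * m Set.univ := by
  rw [rankOne_apply, smul_apply, Measure.toSignedMeasure_dirac_apply x hA, smul_eq_mul]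

lemma GivenByKernel.apply_dirac [MeasurableSingletonClass Ω]
    {S : SignedMeasure Ω →ₗ[ℝ] SignedMeasure Ω} {k : Ω → SignedMeasure Ω}
    (hS : GivenByKernel S k) (x : Ω) {A : Set Ω} (hA : MeasurableSet A) :
    S (Measure.dirac x).toSignedMeasure A = k x A := by
  rw [hS _ A hA, sInt_toSignedMeasure, integral_dirac]

section Supremum

variable [MeasurableSingletonClass Ω] {S : SignedMeasure Ω →ₗ[ℝ] SignedMeasure Ω}
  {m : SignedMeasure Ω} {x : Ω}

lemma le_apply_dirac_univ_of_rankOne_le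
    (h : rankOne {x} m (Measure.dirac x).toSignedMeasure ≤ S (Measure.dirac x).toSignedMeasure) :
    m Set.univ ≤ S (Measure.dirac x).toSignedMeasure Set.univ := by
  have h := h Set.univ .univ
  rwa [rankOne_apply_dirac_univ (measurableSet_singleton x),
    Set.indicator_of_mem (Set.mem_singleton x), Pi.one_apply, one_mul] at h

lemma apply_dirac_univ_eq_zero_of_isLUB {E : Set Ω} (hm : 0 ≤ m) (hE : E.Nonempty)
    (hub : ∀ y ∈ E, ∀ ν : SignedMeasure Ω, 0 ≤ ν → rankOne {y} m ν ≤ S ν)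
    (hlub : ∀ R : SignedMeasure Ω →ₗ[ℝ] SignedMeasure Ω,
      (∀ y ∈ E, ∀ ν : SignedMeasure Ω, 0 ≤ ν → rankOne {y} m ν ≤ R ν) →
      ∀ ν : SignedMeasure Ω, 0 ≤ ν → S ν ≤ R ν)
    (hx : x ∉ E) : S (Measure.dirac x).toSignedMeasure Set.univ = 0 := by
  have hδ := Measure.zero_le_toSignedMeasure (Measure.dirac x)
  obtain ⟨y, hy⟩ := hE
  have hyx : x ∉ ({y} : Set Ω) := fun h => hx (h ▸ hy)
  have hlow := hub y hy _ hδ Set.univ .univ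
  -- `1_{{x}ᶜ} ⊗ m` dominates every `1_{{y}} ⊗ m` with `y ∈ E`, yet vanishes at `δₓ`.
  have hcompl : ∀ y ∈ E, ∀ ν : SignedMeasure Ω, 0 ≤ ν → rankOne {y} m ν ≤ rankOne {x}ᶜ m ν :=
    fun y hy _ hν => rankOne_le_rankOne_of_subset (measurableSet_singleton y)
      (measurableSet_singleton x).compl
      (Set.singleton_subset_iff.2 fun h => hx (Set.mem_singleton_iff.1 h ▸ hy)) hm hν
  have hupp := hlub _ hcompl _ hδ Set.univ .univ
  rw [rankOne_apply_dirac_univ (measurableSet_singleton y), Set.indicator_of_notMem hyx,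
    zero_mul] at hlow
  rw [rankOne_apply_dirac_univ (measurableSet_singleton x).compl,
    Set.indicator_of_notMem (Set.notMem_compl_iff.2 (Set.mem_singleton x)), zero_mul] at hupp
  exact le_antisymm hupp hlow

end Supremum

end MeasureTheory

open MeasureTheory in
theorem stmt16 (E : Set ℝ) (hE : ¬ MeasurableSet E)
    (μ : Measure ℝ) [IsProbabilityMeasure μ]
    (Tx : ℝ → SignedMeasure ℝ →ₗ[ℝ] SignedMeasure ℝ)
    (hTx : ∀ x : ℝ, ∀ ν : SignedMeasure ℝ, Tx x ν = ν {x} • μ.toSignedMeasure) :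
    (∃ Bd : SignedMeasure ℝ →ₗ[ℝ] SignedMeasure ℝ,
      (∃ k : ℝ → SignedMeasure ℝ, IsBddKernel k ∧ GivenByKernel Bd k) ∧
      ∀ x ∈ E, ∀ ν : SignedMeasure ℝ, 0 ≤ ν → Tx x ν ≤ Bd ν) ∧
    ∀ S : SignedMeasure ℝ →ₗ[ℝ] SignedMeasure ℝ,
      (∀ x ∈ E, ∀ ν : SignedMeasure ℝ, 0 ≤ ν → Tx x ν ≤ S ν) →
      (∀ R : SignedMeasure ℝ →ₗ[ℝ] SignedMeasure ℝ,
        (∀ x ∈ E, ∀ ν : SignedMeasure ℝ, 0 ≤ ν → Tx x ν ≤ R ν) →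
        ∀ ν : SignedMeasure ℝ, 0 ≤ ν → S ν ≤ R ν) →
      (∀ x ∉ E, S (Measure.dirac x).toSignedMeasure Set.univ = 0) ∧
      (∀ x ∈ E, 1 ≤ S (Measure.dirac x).toSignedMeasure Set.univ) ∧
      ¬ ∃ k : ℝ → SignedMeasure ℝ, IsBddKernel k ∧ GivenByKernel S k := by
  obtain rfl : Tx = fun x => rankOne {x} μ.toSignedMeasure :=
    funext fun x => LinearMap.ext (hTx x)
  have hμ := Measure.zero_le_toSignedMeasure μ
  refine ⟨⟨rankOne Set.univ μ.toSignedMeasure,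
    ⟨_, isBddKernel_const _, givenByKernel_rankOne_univ _⟩, fun x _ _ hν =>
      rankOne_le_rankOne_of_subset (measurableSet_singleton x) .univ (Set.subset_univ _) hμ hν⟩,
    fun S hub hlub => ?_⟩
  have hE_ne : E.Nonempty := Set.nonempty_iff_ne_empty.2 fun h => hE (h ▸ .empty)
  have hzero : ∀ x ∉ E, S (Measure.dirac x).toSignedMeasure Set.univ = 0 :=
    fun x => apply_dirac_univ_eq_zero_of_isLUB hμ hE_ne hub hlub
  have hone : ∀ x ∈ E, 1 ≤ S (Measure.dirac x).toSignedMeasure Set.univ := fun x hx => by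
    simpa using le_apply_dirac_univ_of_rankOne_le (hub x hx _ (Measure.zero_le_toSignedMeasure _))
  refine ⟨hzero, hone, ?_⟩
  rintro ⟨k, ⟨hk, -⟩, hSk⟩
  have hE_eq : E = {x | 1 ≤ k x Set.univ} := by
    ext x
    rw [Set.mem_ofPred_eq, ← hSk.apply_dirac x .univ]
    exact ⟨hone x, fun h => by_contra fun hx => by linarith [hzero x hx]⟩
  exact hE (hE_eq ▸ measurableSet_le measurable_const (hk _ .univ))
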